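/- Let $A$ be an admissible ring and $I_1 \supseteq I_2 \supseteq \cdots$ a descending chain of open ideals of $A$ (not necessarily a basis of neighborhoods of $0$) such that $\sqrt{I_i} = \sqrt{I_1}$ for every $i$. Then $B := \varprojlim A/I_i$ is an admissible ring and the natural map $A \to B$ is a continuous ring homomorphism. -/

import Mathlib

open Filter Topology

/-- The descending chain `I` of ideals is a basis of neighborhoods of `0`
(this is the `{Iᵢ}`-topology). -/
def IsChainBasis (A : Type*) [CommRing A] [TopologicalSpace A] (I : ℕ → Ideal A) : Prop :=
  Antitone I ∧ ∀ s : Set A, s ∈ nhds (0 : A) ↔ ∃ i, (I i : Set A) ⊆ s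

/-- An ideal of definition: an open ideal all of whose elements are topologically nilpotent. -/
def IsIdealOfDefinition (A : Type*) [CommRing A] [TopologicalSpace A] (J : Ideal A) : Prop :=
  IsOpen (J : Set A) ∧ ∀ x ∈ J, Filter.Tendsto (fun n => x ^ n) Filter.atTop (nhds (0 : A))

/-- An admissible ring: a topological ring, linearly topologized with a countable chain of
ideals as a basis of neighborhoods of `0`, separated, complete, admitting an ideal of
definition. -/
structure IsAdmissible (A : Type*) [CommRing A] [TopologicalSpace A] : Prop where
  topRing : IsTopologicalRing A
  exists_chain : ∃ I : ℕ → Ideal A, IsChainBasis A I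
  separated : ∀ x : A, (∀ U ∈ nhds (0 : A), x ∈ U) → x = 0
  complete : ∀ f : ℕ → A,
    (∀ U ∈ nhds (0 : A), ∃ N, ∀ m ≥ N, ∀ n ≥ N, f m - f n ∈ U) →
    ∃ a : A, ∀ U ∈ nhds (0 : A), ∃ N, ∀ n ≥ N, a - f n ∈ U
  exists_idealOfDef : ∃ J : Ideal A, IsIdealOfDefinition A J

/-- The topology of `A` is the `J`-adic topology: the powers `J ^ n` form a basis of
neighborhoods of `0`. -/
def IsAdicTopology (A : Type*) [CommRing A] [TopologicalSpace A] (J : Ideal A) : Prop :=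
  ∀ s : Set A, s ∈ nhds (0 : A) ↔ ∃ n : ℕ, ((J ^ n : Ideal A) : Set A) ⊆ s

/-- The inverse limit `varprojlim A/Iᵢ` of the quotients along a descending chain of ideals,
realized as the subring of compatible families in `Π i, A ⧸ I i`. -/
def limSubring (A : Type*) [CommRing A] (I : ℕ → Ideal A) (hI : ∀ i, I (i + 1) ≤ I i) :
    Subring (∀ i, A ⧸ I i) where
  carrier := {g | ∀ i, Ideal.Quotient.factor (S := I (i + 1)) (T := I i) (hI i) (g (i + 1)) = g i}
  zero_mem' := by intro i; simp
  one_mem' := by intro i; simp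
  add_mem' := by intro a b ha hb; intro i; simp [map_add, ha i, hb i]
  mul_mem' := by intro a b ha hb; intro i; simp [map_mul, ha i, hb i]
  neg_mem' := by intro a ha i; simp [map_neg, ha i]

/-- The inverse limit topology on `limSubring`, where each `A ⧸ I i` is discrete. -/
def limTopology (A : Type*) [CommRing A] (I : ℕ → Ideal A) (hI : ∀ i, I (i + 1) ≤ I i) :
    TopologicalSpace (limSubring A I hI) :=
  TopologicalSpace.induced Subtype.val
    (@Pi.topologicalSpace ℕ (fun i => A ⧸ I i) (fun _ => ⊥))

/-- The natural ring homomorphism `A → varprojlim A/Iᵢ`. -/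
def toLim (A : Type*) [CommRing A] (I : ℕ → Ideal A) (hI : ∀ i, I (i + 1) ≤ I i) :
    A →+* limSubring A I hI :=
  RingHom.codRestrict (Pi.ringHom fun i => Ideal.Quotient.mk (I i)) _
    (fun a i => Ideal.Quotient.factor_mk (hI i) a)

/-!
The kernels `Bᵢ` of the projections `B = varprojlim A/Iᵢ → A/Iᵢ` form a descending chain of
ideals, and since every `A/Iᵢ` is discrete they are a basis of neighborhoods of `0` in `B`;
separatedness and completeness of `B` are then checked coordinatewise. `B₀` is an ideal of
definition: if `x ∈ B₀` is the class of `a` modulo `Iᵢ`, then `a ∈ I₀ ⊆ √Iᵢ`, so a power of `x`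
vanishes in `A/Iᵢ`. Finally `A → A/Iᵢ` is continuous because its fibres are translates of the open
ideal `Iᵢ`.
-/

theorem Ideal.Quotient.continuous_mk_bot {A : Type*} [CommRing A] [TopologicalSpace A]
    [ContinuousSub A] {J : Ideal A} (hJ : IsOpen (J : Set A)) :
    Continuous[_, ⊥] (Ideal.Quotient.mk J) := by
  refine continuous_def.2 fun s _ => ?_
  rw [← Set.biUnion_preimage_singleton]
  refine isOpen_biUnion fun b _ => ?_
  obtain ⟨c, rfl⟩ := Ideal.Quotient.mk_surjective b
  have hfibre : Ideal.Quotient.mk J ⁻¹' {Ideal.Quotient.mk J c} = (· - c) ⁻¹' J := by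
    ext a
    simp [Ideal.Quotient.mk_eq_mk_iff_sub_mem]
  exact hfibre ▸ hJ.preimage (continuous_sub_right c)

namespace limSubring

variable {A : Type*} [CommRing A] {I : ℕ → Ideal A} {hI : ∀ i, I (i + 1) ≤ I i}

lemma apply_of_le (g : limSubring A I hI) {i j : ℕ} (hji : j ≤ i) :
    g.1 j = Ideal.Quotient.factor (antitone_nat_of_succ_le hI hji) (g.1 i) := by
  induction i, hji using Nat.le_induction with
  | base => simp
  | succ i hji ih => rw [ih, ← g.2 i, Ideal.Quotient.factor_comp_apply]

variable (I hI) in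
def kerProj (i : ℕ) : Ideal (limSubring A I hI) :=
  RingHom.ker ((Pi.evalRingHom (fun j => A ⧸ I j) i).comp (limSubring A I hI).subtype)

lemma mem_kerProj {g : limSubring A I hI} {i : ℕ} : g ∈ kerProj I hI i ↔ g.1 i = 0 := Iff.rfl

lemma kerProj_antitone : Antitone (kerProj I hI) := fun _ _ hji g hg => by
  rw [mem_kerProj, apply_of_le g hji, mem_kerProj.1 hg, map_zero]

section DiscreteQuotients

-- With these instances the subtype topology on `limSubring A I hI` is `limTopology A I hI`.
local instance (i : ℕ) : TopologicalSpace (A ⧸ I i) := ⊥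
local instance (i : ℕ) : DiscreteTopology (A ⧸ I i) := ⟨rfl⟩

lemma nhds_zero_eq : 𝓝 (0 : limSubring A I hI) = ⨅ i, 𝓟 (kerProj I hI i : Set _) := by
  rw [nhds_induced, nhds_pi]
  simp only [nhds_discrete, Filter.pi, comap_iInf, comap_pure, comap_principal]
  rfl

lemma hasBasis_nhds_zero :
    (𝓝 (0 : limSubring A I hI)).HasBasis (fun _ : ℕ => True)
      (fun i => (kerProj I hI i : Set (limSubring A I hI))) :=
  nhds_zero_eq (hI := hI) ▸ hasBasis_iInf_principal
    (kerProj_antitone.directed_ge.mono_comp _ fun _ _ h => h)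

lemma kerProj_mem_nhds_zero (i : ℕ) : (kerProj I hI i : Set (limSubring A I hI)) ∈ 𝓝 0 :=
  hasBasis_nhds_zero.mem_of_mem trivial

lemma isOpen_kerProj (i : ℕ) : IsOpen (kerProj I hI i : Set (limSubring A I hI)) :=
  (kerProj I hI i).toAddSubgroup.isOpen_of_mem_nhds (kerProj_mem_nhds_zero i)

lemma exists_limit_of_cauchy (f : ℕ → limSubring A I hI)
    (hf : ∀ U ∈ 𝓝 0, ∃ N, ∀ m ≥ N, ∀ n ≥ N, f m - f n ∈ U) :
    ∃ a, ∀ U ∈ 𝓝 0, ∃ N, ∀ n ≥ N, a - f n ∈ U := by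
  choose N hN using fun i => hf _ (kerProj_mem_nhds_zero i)
  have hcoord : ∀ i, ∀ m ≥ N i, ∀ n ≥ N i, (f m).1 i = (f n).1 i :=
    fun i m hm n hn => sub_eq_zero.1 (mem_kerProj.1 (hN i m hm n hn))
  refine ⟨⟨fun i => (f (N i)).1 i, fun i => ?_⟩, fun U hU => ?_⟩
  · show Ideal.Quotient.factor _ ((f (N (i + 1))).1 (i + 1)) = (f (N i)).1 i
    -- both sides agree with `f (max (N i) (N (i + 1)))` in coordinate `i`
    have hm := le_max_left (N i) (N (i + 1))
    have hm' := le_max_right (N i) (N (i + 1))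
    rw [hcoord (i + 1) _ le_rfl _ hm', (f _).2 i, hcoord i _ hm _ le_rfl]
  · obtain ⟨i, -, hi⟩ := hasBasis_nhds_zero.mem_iff.1 hU
    exact ⟨N i, fun n hn => hi (mem_kerProj.2 (sub_eq_zero.2 (hcoord i _ le_rfl n hn)))⟩

lemma tendsto_pow_of_mem_kerProj_zero (hrad : ∀ i, I 0 ≤ (I i).radical)
    {x : limSubring A I hI} (hx : x ∈ kerProj I hI 0) :
    Tendsto (fun n => x ^ n) atTop (𝓝 0) := by
  refine hasBasis_nhds_zero.tendsto_right_iff.2 fun i _ => ?_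
  obtain ⟨a, ha⟩ := Ideal.Quotient.mk_surjective (x.1 i)
  have ha₀ : a ∈ I 0 := by
    rw [← Ideal.Quotient.eq_zero_iff_mem, ← Ideal.Quotient.factor_mk (antitone_nat_of_succ_le hI
      (Nat.zero_le i)), ha, ← apply_of_le x (Nat.zero_le i)]
    exact hx
  obtain ⟨n, hn⟩ := hrad i ha₀
  filter_upwards [eventually_ge_atTop n] with m hm
  refine mem_kerProj.2 (pow_eq_zero_of_le hm ?_)
  rw [← ha, ← map_pow, Ideal.Quotient.eq_zero_iff_mem]
  exact hn

theorem isAdmissible (hrad : ∀ i, I 0 ≤ (I i).radical) : IsAdmissible (limSubring A I hI) where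
  topRing := inferInstance
  exists_chain := ⟨kerProj I hI, kerProj_antitone, fun _ => hasBasis_nhds_zero.mem_iff.trans
    (by simp only [true_and])⟩
  separated x hx := Subtype.ext (funext fun i => mem_kerProj.1 (hx _ (kerProj_mem_nhds_zero i)))
  complete := exists_limit_of_cauchy
  exists_idealOfDef := ⟨kerProj I hI 0, isOpen_kerProj 0,
    fun _ => tendsto_pow_of_mem_kerProj_zero hrad⟩

end DiscreteQuotients

theorem continuous_toLim [TopologicalSpace A] [ContinuousSub A]
    (hopen : ∀ i, IsOpen (I i : Set A)) : Continuous[_, limTopology A I hI] (toLim A I hI) :=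
  continuous_induced_rng.2 <| @continuous_pi _ _ _ _ (fun _ => ⊥) _ fun i =>
    Ideal.Quotient.continuous_mk_bot (hopen i)

end limSubring

theorem stmt_2 (A : Type*) [CommRing A] [TopologicalSpace A] (hA : IsAdmissible A)
    (I : ℕ → Ideal A) (hdesc : ∀ i, I (i + 1) ≤ I i)
    (hopen : ∀ i, IsOpen ((I i : Ideal A) : Set A))
    (hrad : ∀ i, (I i).radical = (I 0).radical) :
    letI := limTopology A I hdesc
    IsAdmissible (limSubring A I hdesc) ∧ Continuous (toLim A I hdesc) := by
  have := hA.topRing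
  exact ⟨limSubring.isAdmissible fun i => hrad i ▸ Ideal.le_radical,
    limSubring.continuous_toLim hopen⟩
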